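/- arXiv:1712.08015 — 2 statements merged into one kernel-verified Lean document; each statement's English description precedes it below -/
import Mathlib

section
/- Weak duality for the Wasserstein DRO problem: for any λ ≥ 0 and any y₁,…,y_N satisfying yₙ ≥ aₖᵀξ̂ⁿ + bₖ for all k and n, and λ ≥ ‖aₖ‖_* for all k, we have sup_{μ : W(μ,ν) ≤ θ} E_μ[max_k(aₖᵀξ + bₖ)] ≤ λθ + (1/N)Σ_{n=1}^N yₙ, where ν = (1/N)Σ_n δ_{ξ̂ⁿ}. -/
open MeasureTheory Matrix
open scoped ENNReal

noncomputable def Wdist (d : ℕ) (μ ν : Measure (Fin d → ℝ)) : ℝ :=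
  sInf {r : ℝ | ∃ γ : Measure ((Fin d → ℝ) × (Fin d → ℝ)),
    IsProbabilityMeasure γ ∧ γ.map Prod.fst = μ ∧ γ.map Prod.snd = ν ∧
    r = ∫ p, ‖p.1 - p.2‖ ∂γ}

/-- The dual norm `‖a‖_* = sup {aᵀx : ‖x‖ ≤ 1}`. -/
noncomputable def dualNorm (d : ℕ) (a : Fin d → ℝ) : ℝ :=
  sSup {r : ℝ | ∃ x : Fin d → ℝ, ‖x‖ ≤ 1 ∧ r = a ⬝ᵥ x}

section Aux

lemma dual_bdd (d : ℕ) (a : Fin d → ℝ) :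
    BddAbove {r : ℝ | ∃ x : Fin d → ℝ, ‖x‖ ≤ 1 ∧ r = a ⬝ᵥ x} := by
  refine ⟨∑ i, |a i|, ?_⟩
  rintro r ⟨x, hx, rfl⟩
  calc a ⬝ᵥ x ≤ ∑ i, |a i * x i| := Finset.sum_le_sum fun i _ => le_abs_self _
    _ ≤ ∑ i, |a i| := by
        refine Finset.sum_le_sum fun i _ => ?_
        rw [abs_mul]
        have hxi : |x i| ≤ 1 := by
          have := (norm_le_pi_norm x i).trans hx
          rwa [Real.norm_eq_abs] at this
        nlinarith [abs_nonneg (a i), abs_nonneg (x i)]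

lemma dual_dot_le (d : ℕ) (a : Fin d → ℝ) (lam : ℝ)
    (h : dualNorm d a ≤ lam) (v : Fin d → ℝ) : a ⬝ᵥ v ≤ lam * ‖v‖ := by
  rcases eq_or_ne v 0 with rfl | hv
  · simp [dotProduct]
  · have hvn : (0:ℝ) < ‖v‖ := norm_pos_iff.mpr hv
    set u : Fin d → ℝ := ‖v‖⁻¹ • v with hu
    have hun : ‖u‖ ≤ 1 := by
      rw [hu, norm_smul, norm_inv, norm_norm, inv_mul_cancel₀ hvn.ne']
    have hmem : a ⬝ᵥ u ∈ {r : ℝ | ∃ x : Fin d → ℝ, ‖x‖ ≤ 1 ∧ r = a ⬝ᵥ x} :=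
      ⟨u, hun, rfl⟩
    have h1 : a ⬝ᵥ u ≤ lam := (le_csSup (dual_bdd d a) hmem).trans h
    have h2 : a ⬝ᵥ u = ‖v‖⁻¹ * (a ⬝ᵥ v) := by
      rw [hu]; simp only [dotProduct, Pi.smul_apply, smul_eq_mul, Finset.mul_sum]
      exact Finset.sum_congr rfl fun i _ => by ring
    rw [h2] at h1
    calc a ⬝ᵥ v = ‖v‖ * (‖v‖⁻¹ * (a ⬝ᵥ v)) := by field_simp
      _ ≤ ‖v‖ * lam := by nlinarith
      _ = lam * ‖v‖ := mul_comm _ _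

variable {d K : ℕ} {a : Fin K → (Fin d → ℝ)} {b : Fin K → ℝ}

lemma f_lip (lam : ℝ) (hlamk : ∀ k, ∀ v, a k ⬝ᵥ v ≤ lam * ‖v‖)
    (hne : (Finset.univ : Finset (Fin K)).Nonempty) (x z : Fin d → ℝ) :
    Finset.univ.sup' hne (fun k => a k ⬝ᵥ x + b k) ≤
      Finset.univ.sup' hne (fun k => a k ⬝ᵥ z + b k) + lam * ‖x - z‖ := by
  refine Finset.sup'_le _ _ fun k _ => ?_
  have h1 : a k ⬝ᵥ x = a k ⬝ᵥ z + a k ⬝ᵥ (x - z) := by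
    rw [dotProduct_sub]; ring
  have h2 : a k ⬝ᵥ z + b k ≤ Finset.univ.sup' hne (fun k => a k ⬝ᵥ z + b k) :=
    Finset.le_sup' (fun k => a k ⬝ᵥ z + b k) (Finset.mem_univ k)
  have h3 := hlamk k (x - z)
  linarith

lemma f_meas (hne : (Finset.univ : Finset (Fin K)).Nonempty) :
    Measurable (fun ξ : Fin d → ℝ => Finset.univ.sup' hne (fun k => a k ⬝ᵥ ξ + b k)) := by
  have heq : (fun ξ : Fin d → ℝ => Finset.univ.sup' hne fun k => a k ⬝ᵥ ξ + b k)
      = Finset.univ.sup' hne (fun k (ξ : Fin d → ℝ) => a k ⬝ᵥ ξ + b k) := by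
    funext ξ; rw [Finset.sup'_apply]
  rw [heq]
  apply Finset.measurable_sup' hne
  intro k _
  exact Measurable.add (by unfold dotProduct; fun_prop) measurable_const

variable {N : ℕ} {xhat : Fin N → (Fin d → ℝ)}

lemma my_integrable_dirac {g : (Fin d → ℝ) → ℝ} (hg : Measurable g) (x : Fin d → ℝ) :
    Integrable g (Measure.dirac x) := by
  refine ⟨hg.aestronglyMeasurable, ?_⟩
  rw [HasFiniteIntegral, lintegral_dirac]
  exact ENNReal.coe_lt_top

lemma nu_prob (hN : 0 < N) :
    IsProbabilityMeasure ((N : ℝ≥0∞)⁻¹ • ∑ n, Measure.dirac (xhat n)) := by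
  constructor
  simp [Measure.smul_apply, Measure.finset_sum_apply, smul_eq_mul]
  rw [ENNReal.inv_mul_cancel (by exact_mod_cast hN.ne') (by simp)]

lemma integrable_nu (hN : 0 < N) (g : (Fin d → ℝ) → ℝ) (hg : Measurable g) :
    Integrable g ((N : ℝ≥0∞)⁻¹ • ∑ n, Measure.dirac (xhat n)) := by
  apply Integrable.smul_measure
  · apply integrable_finset_sum_measure.mpr
    intro n _
    exact my_integrable_dirac hg _
  · simp [hN.ne']

lemma integral_nu (hN : 0 < N) (g : (Fin d → ℝ) → ℝ) (hg : Measurable g) :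
    ∫ ξ, g ξ ∂((N : ℝ≥0∞)⁻¹ • ∑ n, Measure.dirac (xhat n))
      = (1 / N : ℝ) * ∑ n, g (xhat n) := by
  rw [integral_smul_measure, integral_finset_sum_measure
    (fun n _ => my_integrable_dirac hg _)]
  simp only [integral_dirac, ENNReal.toReal_inv, ENNReal.toReal_natCast, smul_eq_mul, one_div]

end Aux

/-- Weak duality for the Wasserstein DRO problem with a piecewise-affine objective. -/
theorem wasserstein_dro_weak_duality (d N K : ℕ) (hN : 0 < N) (hK : 0 < K)
    (xhat : Fin N → (Fin d → ℝ))
    (a : Fin K → (Fin d → ℝ)) (b : Fin K → ℝ) (θ : ℝ) (hθ : 0 ≤ θ)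
    (lam : ℝ) (hlam : 0 ≤ lam) (y : Fin N → ℝ)
    (hy : ∀ k n, a k ⬝ᵥ xhat n + b k ≤ y n)
    (hlamk : ∀ k, dualNorm d (a k) ≤ lam) :
    ∀ μ : Measure (Fin d → ℝ), IsProbabilityMeasure μ →
      Integrable (fun ξ => ‖ξ‖) μ →
      Integrable (fun ξ =>
        Finset.univ.sup' (Finset.univ_nonempty_iff.mpr (Fin.pos_iff_nonempty.mp hK))
          (fun k => a k ⬝ᵥ ξ + b k)) μ →
      Wdist d μ ((N : ℝ≥0∞)⁻¹ • ∑ n, Measure.dirac (xhat n)) ≤ θ →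
      (∫ ξ, Finset.univ.sup' (Finset.univ_nonempty_iff.mpr (Fin.pos_iff_nonempty.mp hK))
          (fun k => a k ⬝ᵥ ξ + b k) ∂μ) ≤ lam * θ + (1 / N : ℝ) * ∑ n, y n := by
  intro μ hμ hnormint hfint hW
  set hne : (Finset.univ : Finset (Fin K)).Nonempty :=
    Finset.univ_nonempty_iff.mpr (Fin.pos_iff_nonempty.mp hK) with hhne
  set f : (Fin d → ℝ) → ℝ := fun ξ => Finset.univ.sup' hne (fun k => a k ⬝ᵥ ξ + b k)
    with hfdef
  set ν : Measure (Fin d → ℝ) := (N : ℝ≥0∞)⁻¹ • ∑ n, Measure.dirac (xhat n) with hν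
  have hνp : IsProbabilityMeasure ν := nu_prob hN
  have hfm : Measurable f := f_meas hne
  have hdual : ∀ k v, a k ⬝ᵥ v ≤ lam * ‖v‖ := fun k => dual_dot_le d (a k) lam (hlamk k)
  have hlip : ∀ x z : Fin d → ℝ, f x ≤ f z + lam * ‖x - z‖ :=
    fun x z => f_lip lam hdual hne x z
  -- ε-approximation
  have key : ∀ ε : ℝ, 0 < ε →
      (∫ ξ, f ξ ∂μ) ≤ lam * θ + (1 / N : ℝ) * ∑ n, y n + (lam + 1) * ε := by
    intro ε hε
    -- the coupling set is nonempty
    have hSne : {r : ℝ | ∃ γ : Measure ((Fin d → ℝ) × (Fin d → ℝ)),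
        IsProbabilityMeasure γ ∧ γ.map Prod.fst = μ ∧ γ.map Prod.snd = ν ∧
        r = ∫ p, ‖p.1 - p.2‖ ∂γ}.Nonempty := by
      refine ⟨∫ p, ‖p.1 - p.2‖ ∂(μ.prod ν), μ.prod ν, inferInstance, ?_, ?_, rfl⟩
      · rw [Measure.map_fst_prod]; simp
      · rw [Measure.map_snd_prod]; simp
    have hlt : Wdist d μ ν < θ + ε := lt_of_le_of_lt hW (by linarith)
    obtain ⟨r, ⟨γ, hγp, hγ1, hγ2, hr⟩, hrlt⟩ :=
      exists_lt_of_csInf_lt hSne hlt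
    -- integrability facts
    have hnorm_cont : Continuous (fun ξ : Fin d → ℝ => ‖ξ‖) := continuous_norm
    have hint_n1 : Integrable (fun p : (Fin d → ℝ) × (Fin d → ℝ) => ‖p.1‖) γ := by
      have : Integrable (fun ξ : Fin d → ℝ => ‖ξ‖) (γ.map Prod.fst) := hγ1 ▸ hnormint
      exact (integrable_map_measure hnorm_cont.aestronglyMeasurable
        measurable_fst.aemeasurable).mp this
    have hint_n2 : Integrable (fun p : (Fin d → ℝ) × (Fin d → ℝ) => ‖p.2‖) γ := by
      have hIν : Integrable (fun ξ : Fin d → ℝ => ‖ξ‖) ν :=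
        integrable_nu hN _ hnorm_cont.measurable
      have : Integrable (fun ξ : Fin d → ℝ => ‖ξ‖) (γ.map Prod.snd) := hγ2 ▸ hIν
      exact (integrable_map_measure hnorm_cont.aestronglyMeasurable
        measurable_snd.aemeasurable).mp this
    have hint_d : Integrable (fun p : (Fin d → ℝ) × (Fin d → ℝ) => ‖p.1 - p.2‖) γ := by
      refine (hint_n1.add hint_n2).mono'
        ((continuous_fst.sub continuous_snd).norm.aestronglyMeasurable) ?_
      filter_upwards with p
      rw [norm_norm]
      exact norm_sub_le _ _
    have hint_f1 : Integrable (fun p : (Fin d → ℝ) × (Fin d → ℝ) => f p.1) γ := by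
      have : Integrable f (γ.map Prod.fst) := hγ1 ▸ hfint
      exact (integrable_map_measure hfm.aestronglyMeasurable
        measurable_fst.aemeasurable).mp this
    have hint_f2 : Integrable (fun p : (Fin d → ℝ) × (Fin d → ℝ) => f p.2) γ := by
      have hIν : Integrable f ν := integrable_nu hN _ hfm
      have : Integrable f (γ.map Prod.snd) := hγ2 ▸ hIν
      exact (integrable_map_measure hfm.aestronglyMeasurable
        measurable_snd.aemeasurable).mp this
    -- the chain of inequalities
    have e1 : (∫ ξ, f ξ ∂μ) = ∫ p, f p.1 ∂γ := by
      rw [← hγ1, integral_map measurable_fst.aemeasurable hfm.aestronglyMeasurable]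
    have e2 : (∫ p, f p.1 ∂γ) ≤ ∫ p, (f p.2 + lam * ‖p.1 - p.2‖) ∂γ :=
      integral_mono hint_f1 (hint_f2.add (hint_d.const_mul lam))
        (fun p => hlip p.1 p.2)
    have e3 : (∫ p, (f p.2 + lam * ‖p.1 - p.2‖) ∂γ)
        = (∫ p, f p.2 ∂γ) + lam * ∫ p, ‖p.1 - p.2‖ ∂γ := by
      rw [integral_add hint_f2 (hint_d.const_mul lam), integral_const_mul]
    have e4 : (∫ p, f p.2 ∂γ) = ∫ ξ, f ξ ∂ν := by
      rw [← hγ2, integral_map measurable_snd.aemeasurable hfm.aestronglyMeasurable]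
    have e5 : (∫ ξ, f ξ ∂ν) = (1 / N : ℝ) * ∑ n, f (xhat n) :=
      integral_nu hN f hfm
    have e6 : (1 / N : ℝ) * ∑ n, f (xhat n) ≤ (1 / N : ℝ) * ∑ n, y n := by
      apply mul_le_mul_of_nonneg_left _ (by positivity)
      exact Finset.sum_le_sum fun n _ => Finset.sup'_le _ _ fun k _ => hy k n
    have e7 : lam * (∫ p, ‖p.1 - p.2‖ ∂γ) ≤ lam * (θ + ε) :=
      mul_le_mul_of_nonneg_left (le_of_lt (hr ▸ hrlt)) hlam
    have : (∫ ξ, f ξ ∂μ) ≤ (1 / N : ℝ) * ∑ n, y n + lam * (θ + ε) := by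
      rw [e1]
      calc (∫ p, f p.1 ∂γ) ≤ (∫ p, f p.2 ∂γ) + lam * ∫ p, ‖p.1 - p.2‖ ∂γ := by
            rw [← e3]; exact e2
        _ ≤ (1 / N : ℝ) * ∑ n, y n + lam * (θ + ε) := by
            rw [e4, e5]; exact add_le_add e6 e7
    nlinarith
  -- conclude
  refine le_of_forall_pos_le_add fun ε hε => ?_
  have hpos : (0:ℝ) < lam + 1 := by linarith
  have := key (ε / (lam + 1)) (by positivity)
  calc (∫ ξ, f ξ ∂μ)
      ≤ lam * θ + (1 / N : ℝ) * ∑ n, y n + (lam + 1) * (ε / (lam + 1)) := this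
    _ = lam * θ + (1 / N : ℝ) * ∑ n, y n + ε := by field_simp
end

section
/- Combining the previous majorization with the transport bound: if aᵀξ + b ≤ (ξ − m̂)ᵀΓ(ξ − m̂) + ζᵀ(ξ − ξ̂ⁿ) + yₙ holds for all ξ, all pieces a = aₖ, b = bₖ, and all samples n, with ‖ζ^{nk}‖_* ≤ λ, Γ ⪰ 0, λ ≥ 0, then for every μ ∈ M₁ ∩ M₂, E_μ[max_k(aₖᵀξ + bₖ)] ≤ λθ + τ·tr(ΓΣ̂) + (1/N)Σₙ yₙ. -/
open MeasureTheory Matrix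
open scoped ENNReal

/-- The centered second-moment matrix of a distribution μ around a point m. -/
noncomputable def secondMoment (d : ℕ) (μ : Measure (Fin d → ℝ)) (m : Fin d → ℝ) :
    Matrix (Fin d) (Fin d) ℝ :=
  Matrix.of fun i j => ∫ ξ, (ξ i - m i) * (ξ j - m j) ∂μ

lemma dotProduct_le_dualNorm {d : ℕ} (u v : Fin d → ℝ) :
    u ⬝ᵥ v ≤ dualNorm d u * ‖v‖ := by
  have hbdd : BddAbove {r : ℝ | ∃ x : Fin d → ℝ, ‖x‖ ≤ 1 ∧ r = u ⬝ᵥ x} := by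
    refine ⟨∑ i, |u i|, ?_⟩
    rintro r ⟨x, hx, rfl⟩
    calc u ⬝ᵥ x ≤ ∑ i, |u i * x i| :=
          Finset.sum_le_sum fun i _ => le_abs_self _
      _ ≤ ∑ i, |u i| := by
          refine Finset.sum_le_sum fun i _ => ?_
          rw [abs_mul]
          have hxi : |x i| ≤ 1 := le_trans (by simpa using norm_le_pi_norm x i) hx
          nlinarith [abs_nonneg (u i)]
  rcases eq_or_ne v 0 with rfl | hv
  · simp
  · have hvpos : (0:ℝ) < ‖v‖ := norm_pos_iff.mpr hv
    have hmem : ‖v‖⁻¹ * (u ⬝ᵥ v) ∈ {r : ℝ | ∃ x : Fin d → ℝ, ‖x‖ ≤ 1 ∧ r = u ⬝ᵥ x} := by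
      refine ⟨‖v‖⁻¹ • v, ?_, ?_⟩
      · rw [norm_smul]
        simp [abs_of_pos (inv_pos.mpr hvpos), inv_mul_cancel₀ hvpos.ne']
      · rw [dotProduct_smul]; rfl
    have h : ‖v‖⁻¹ * (u ⬝ᵥ v) ≤ dualNorm d u := le_csSup hbdd hmem
    have h2 := mul_le_mul_of_nonneg_right h hvpos.le
    calc u ⬝ᵥ v = ‖v‖⁻¹ * (u ⬝ᵥ v) * ‖v‖ := by
          field_simp
      _ ≤ dualNorm d u * ‖v‖ := h2

lemma trace_mul_psd {n : Type*} [Fintype n] [DecidableEq n] {A B : Matrix n n ℝ}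
    (hA : A.PosSemidef) (hB : B.PosSemidef) : 0 ≤ (A * B).trace := by
  obtain ⟨k, v, rfl⟩ := Matrix.posSemidef_iff_eq_sum_vecMulVec.mp hA
  rw [Finset.sum_mul, Matrix.trace_sum]
  refine Finset.sum_nonneg fun i _ => ?_
  have h := hB.dotProduct_mulVec_nonneg (v i)
  convert h using 1
  simp only [Matrix.trace, Matrix.diag, Matrix.mul_apply, Matrix.vecMulVec_apply, dotProduct,
    Matrix.mulVec, Finset.mul_sum, Pi.star_apply, star_trivial]
  rw [Finset.sum_comm]
  refine Finset.sum_congr rfl fun j _ => Finset.sum_congr rfl fun l _ => ?_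
  ring

lemma integrable_dirac_of_sm {d : ℕ} {f : (Fin d → ℝ) → ℝ} (hf : StronglyMeasurable f)
    (x : Fin d → ℝ) : Integrable f (Measure.dirac x) := by
  refine ⟨hf.aestronglyMeasurable, ?_⟩
  simp only [HasFiniteIntegral, lintegral_dirac]
  exact ENNReal.coe_lt_top

/-- Weak duality for the W&M-DROPF reformulation: the quadratic-plus-linear
majorization of each affine piece, together with the dual-norm and PSD conditions,
bounds the worst-case expectation over `M₁ ∩ M₂`. -/
theorem wm_dropf_weak_duality (d N K : ℕ) (hN : 0 < N) (hK : 0 < K)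
    (xhat : Fin N → (Fin d → ℝ))
    (a : Fin K → (Fin d → ℝ)) (b : Fin K → ℝ)
    (m : Fin d → ℝ) (hm : m = fun i => (1 / N : ℝ) * ∑ n, xhat n i)
    (Shat : Matrix (Fin d) (Fin d) ℝ)
    (hShat : Shat = Matrix.of fun i j =>
      (1 / N : ℝ) * ∑ n, (xhat n i - m i) * (xhat n j - m j))
    (θ τ : ℝ) (hθ : 0 ≤ θ) (hτ : 1 ≤ τ)
    (Γ : Matrix (Fin d) (Fin d) ℝ) (hΓ : Γ.PosSemidef)
    (lam : ℝ) (hlam : 0 ≤ lam) (y : Fin N → ℝ) (ζ : Fin N → Fin K → (Fin d → ℝ))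
    (hmaj : ∀ n k (ξ : Fin d → ℝ),
      a k ⬝ᵥ ξ + b k ≤ (ξ - m) ⬝ᵥ (Γ *ᵥ (ξ - m)) + ζ n k ⬝ᵥ (ξ - xhat n) + y n)
    (hζ : ∀ n k, dualNorm d (ζ n k) ≤ lam)
    (μ : Measure (Fin d → ℝ)) [IsProbabilityMeasure μ]
    (hμnorm : Integrable (fun ξ => ‖ξ‖) μ)
    (hμmom : ∀ i j, Integrable (fun ξ => (ξ i - m i) * (ξ j - m j)) μ)
    (hμΨ : Integrable (fun ξ =>
      Finset.univ.sup' (Finset.univ_nonempty_iff.mpr (Fin.pos_iff_nonempty.mp hK))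
        (fun k => a k ⬝ᵥ ξ + b k)) μ)
    (hW : Wdist d μ ((N : ℝ≥0∞)⁻¹ • ∑ n, Measure.dirac (xhat n)) ≤ θ)
    (hM2 : (τ • Shat - secondMoment d μ m).PosSemidef) :
    (∫ ξ, Finset.univ.sup' (Finset.univ_nonempty_iff.mpr (Fin.pos_iff_nonempty.mp hK))
        (fun k => a k ⬝ᵥ ξ + b k) ∂μ) ≤
      lam * θ + τ * (Γ * Shat).trace + (1 / N : ℝ) * ∑ n, y n := by
  classical
  have hneK : (Finset.univ : Finset (Fin K)).Nonempty :=
    Finset.univ_nonempty_iff.mpr (Fin.pos_iff_nonempty.mp hK)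
  have hneN : (Finset.univ : Finset (Fin N)).Nonempty :=
    Finset.univ_nonempty_iff.mpr (Fin.pos_iff_nonempty.mp hN)
  set Ψ : (Fin d → ℝ) → ℝ := fun ξ =>
    Finset.univ.sup' (Finset.univ_nonempty_iff.mpr (Fin.pos_iff_nonempty.mp hK))
      (fun k => a k ⬝ᵥ ξ + b k) with hΨdef
  set g : (Fin d → ℝ) → ℝ := fun ξ => (ξ - m) ⬝ᵥ (Γ *ᵥ (ξ - m)) with hgdef
  set H : (Fin d → ℝ) → ℝ := fun x =>
    Finset.univ.inf' hneN (fun n => y n + lam * ‖x - xhat n‖) with hHdef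
  set ν : Measure (Fin d → ℝ) := (N : ℝ≥0∞)⁻¹ • ∑ n, Measure.dirac (xhat n) with hνdef
  have hNne : (N : ℝ≥0∞) ≠ 0 := by exact_mod_cast Nat.cast_ne_zero.mpr hN.ne'
  haveI hνprob : IsProbabilityMeasure ν := by
    constructor
    rw [hνdef]
    simp [Measure.smul_apply, Measure.finset_sum_apply, ENNReal.inv_mul_cancel hNne]
  -- continuity facts
  have hcont_piece : ∀ k : Fin K, Continuous fun ξ : Fin d → ℝ => a k ⬝ᵥ ξ + b k := by
    intro k
    have : Continuous fun ξ : Fin d → ℝ => a k ⬝ᵥ ξ := by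
      simp only [dotProduct]
      exact continuous_finset_sum _ fun i _ => (continuous_const.mul (continuous_apply i))
    exact this.add continuous_const
  have hHc : Continuous H := by
    rw [hHdef]
    exact Continuous.finset_inf'_apply hneN fun n _ =>
      (continuous_const.add (continuous_const.mul ((continuous_id.sub continuous_const).norm)))
  -- integrability wrt ν
  have hintν : ∀ (f : (Fin d → ℝ) → ℝ), StronglyMeasurable f → Integrable f ν := by
    intro f hf
    rw [hνdef]
    refine Integrable.smul_measure ?_ (by simp [hN.ne'])
    exact integrable_finset_sum_measure.mpr fun n _ => integrable_dirac_of_sm hf _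
  have hintν_eq : ∀ (f : (Fin d → ℝ) → ℝ), StronglyMeasurable f →
      ∫ x, f x ∂ν = (1 / N : ℝ) * ∑ n, f (xhat n) := by
    intro f hf
    rw [hνdef, integral_smul_measure,
      integral_finset_sum_measure (fun n _ => integrable_dirac_of_sm hf _)]
    simp [integral_dirac, one_div]
  -- g as a double sum
  have hg_sum : g = fun ξ => ∑ i, ∑ j, Γ i j * ((ξ i - m i) * (ξ j - m j)) := by
    funext ξ
    rw [hgdef]
    simp only [dotProduct, Matrix.mulVec, Pi.sub_apply, Finset.mul_sum]
    exact Finset.sum_congr rfl fun i _ => Finset.sum_congr rfl fun j _ => by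
      ring
  have hg_int : Integrable g μ := by
    rw [hg_sum]
    exact integrable_finset_sum _ fun i _ =>
      integrable_finset_sum _ fun j _ => ((hμmom i j).const_mul _)
  have hg_val : ∫ ξ, g ξ ∂μ = (Γ * secondMoment d μ m).trace := by
    rw [hg_sum]
    refine (integral_finset_sum _ (fun i _ =>
      integrable_finset_sum _ fun j _ => ((hμmom i j).const_mul _))).trans ?_
    have : ∀ i : Fin d, ∫ ξ, (∑ j, Γ i j * ((ξ i - m i) * (ξ j - m j))) ∂μ
        = ∑ j, Γ i j * secondMoment d μ m i j := by
      intro i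
      rw [integral_finset_sum _ (fun j _ => (hμmom i j).const_mul _)]
      exact Finset.sum_congr rfl fun j _ => by
        rw [integral_const_mul]; rfl
    rw [Finset.sum_congr rfl fun i _ => this i]
    rw [Matrix.trace]
    refine Finset.sum_congr rfl fun i _ => ?_
    rw [Matrix.diag_apply, Matrix.mul_apply]
    refine Finset.sum_congr rfl fun j _ => ?_
    have hsymm : secondMoment d μ m j i = secondMoment d μ m i j := by
      simp only [secondMoment, Matrix.of_apply]
      exact integral_congr_ae (Filter.Eventually.of_forall fun ξ => mul_comm _ _)
    rw [hsymm]
  have hg_tr : (Γ * secondMoment d μ m).trace ≤ τ * (Γ * Shat).trace := by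
    have h0 : 0 ≤ (Γ * (τ • Shat - secondMoment d μ m)).trace := trace_mul_psd hΓ hM2
    rw [Matrix.mul_sub, Matrix.trace_sub, Matrix.mul_smul, Matrix.trace_smul] at h0
    simp only [smul_eq_mul] at h0
    linarith
  -- pointwise key inequality
  have hkey : ∀ (ξ x : Fin d → ℝ), Ψ ξ ≤ g ξ + lam * ‖ξ - x‖ + H x := by
    intro ξ x
    obtain ⟨n0, -, hn0⟩ :=
      Finset.exists_mem_eq_inf' hneN (fun n => y n + lam * ‖x - xhat n‖)
    rw [hΨdef]
    refine Finset.sup'_le _ _ fun k _ => ?_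
    have h1 := hmaj n0 k ξ
    have h2 : ζ n0 k ⬝ᵥ (ξ - xhat n0) ≤ lam * ‖ξ - xhat n0‖ :=
      le_trans (dotProduct_le_dualNorm _ _)
        (mul_le_mul_of_nonneg_right (hζ n0 k) (norm_nonneg _))
    have h3 : ‖ξ - xhat n0‖ ≤ ‖ξ - x‖ + ‖x - xhat n0‖ := by
      calc ‖ξ - xhat n0‖ = ‖(ξ - x) + (x - xhat n0)‖ := by rw [sub_add_sub_cancel]
        _ ≤ ‖ξ - x‖ + ‖x - xhat n0‖ := norm_add_le _ _
    have h4 := mul_le_mul_of_nonneg_left h3 hlam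
    have hHx : H x = y n0 + lam * ‖x - xhat n0‖ := by rw [hHdef]; exact hn0
    rw [hHx, hgdef]
    simp only [mul_add] at h4
    linarith
  have hHle : ∀ n, H (xhat n) ≤ y n := by
    intro n
    have := Finset.inf'_le (b := n) (fun n' => y n' + lam * ‖xhat n - xhat n'‖)
      (Finset.mem_univ n)
    exact this.trans (by simp)
  -- ε-argument
  refine le_of_forall_pos_le_add fun ε hε => ?_
  set ε' : ℝ := ε / (lam + 1) with hε'def
  have hε' : 0 < ε' := div_pos hε (by linarith)
  -- get a coupling
  have hSne : Set.Nonempty {r : ℝ | ∃ γ : Measure ((Fin d → ℝ) × (Fin d → ℝ)),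
      IsProbabilityMeasure γ ∧ γ.map Prod.fst = μ ∧ γ.map Prod.snd = ν ∧
      r = ∫ p, ‖p.1 - p.2‖ ∂γ} := by
    refine ⟨_, μ.prod ν, inferInstance, ?_, ?_, rfl⟩
    · simp
    · simp
  have hWlt : Wdist d μ ν < θ + ε' := lt_of_le_of_lt hW (by linarith)
  rw [Wdist] at hWlt
  obtain ⟨r, ⟨γ, hγprob, hfst, hsnd, hreq⟩, hrlt⟩ := exists_lt_of_csInf_lt hSne hWlt
  haveI := hγprob
  -- transfer integrabilities to γ
  have hmapint : ∀ (f : (Fin d → ℝ) → ℝ), Integrable f μ →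
      Integrable (fun p : (Fin d → ℝ) × (Fin d → ℝ) => f p.1) γ := by
    intro f hf
    rw [← hfst] at hf
    exact (integrable_map_measure hf.1 measurable_fst.aemeasurable).mp hf
  have hmapint2 : ∀ (f : (Fin d → ℝ) → ℝ), Integrable f ν →
      Integrable (fun p : (Fin d → ℝ) × (Fin d → ℝ) => f p.2) γ := by
    intro f hf
    rw [← hsnd] at hf
    exact (integrable_map_measure hf.1 measurable_snd.aemeasurable).mp hf
  have hmapeq : ∀ (f : (Fin d → ℝ) → ℝ), Integrable f μ →
      ∫ p, f p.1 ∂γ = ∫ x, f x ∂μ := by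
    intro f hf
    rw [← hfst] at hf ⊢
    exact (integral_map measurable_fst.aemeasurable hf.1).symm
  have hmapeq2 : ∀ (f : (Fin d → ℝ) → ℝ), Integrable f ν →
      ∫ p, f p.2 ∂γ = ∫ x, f x ∂ν := by
    intro f hf
    rw [← hsnd] at hf ⊢
    exact (integral_map measurable_snd.aemeasurable hf.1).symm
  have hνnorm : Integrable (fun x : Fin d → ℝ => ‖x‖) ν :=
    hintν _ continuous_norm.stronglyMeasurable
  have hνH : Integrable H ν := hintν _ hHc.stronglyMeasurable
  have hn1 : Integrable (fun p : (Fin d → ℝ) × (Fin d → ℝ) => ‖p.1‖) γ := hmapint _ hμnorm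
  have hn2 : Integrable (fun p : (Fin d → ℝ) × (Fin d → ℝ) => ‖p.2‖) γ := hmapint2 _ hνnorm
  have hnd : Integrable (fun p : (Fin d → ℝ) × (Fin d → ℝ) => ‖p.1 - p.2‖) γ := by
    refine Integrable.mono' (hn1.add hn2)
      ((continuous_fst.sub continuous_snd).norm.aestronglyMeasurable) ?_
    filter_upwards with p
    simp only [norm_norm]
    exact norm_sub_le _ _
  have hgγ : Integrable (fun p : (Fin d → ℝ) × (Fin d → ℝ) => g p.1) γ := hmapint _ hg_int
  have hHγ : Integrable (fun p : (Fin d → ℝ) × (Fin d → ℝ) => H p.2) γ := hmapint2 _ hνH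
  have hΨγ : Integrable (fun p : (Fin d → ℝ) × (Fin d → ℝ) => Ψ p.1) γ := hmapint _ hμΨ
  -- the main integral inequality over γ
  have hmono : ∫ p, Ψ p.1 ∂γ ≤
      ∫ p, (g p.1 + lam * ‖p.1 - p.2‖ + H p.2) ∂γ := by
    refine integral_mono hΨγ ((hgγ.add (hnd.const_mul lam)).add hHγ) ?_
    intro p
    exact hkey p.1 p.2
  have hndc : Integrable (fun p : (Fin d → ℝ) × (Fin d → ℝ) => lam * ‖p.1 - p.2‖) γ :=
    hnd.const_mul lam
  have I1 : Integrable (fun p : (Fin d → ℝ) × (Fin d → ℝ) =>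
      g p.1 + lam * ‖p.1 - p.2‖) γ := hgγ.add hndc
  have hsplit : ∫ p, (g p.1 + lam * ‖p.1 - p.2‖ + H p.2) ∂γ
      = (∫ p, g p.1 ∂γ) + lam * (∫ p, ‖p.1 - p.2‖ ∂γ) + ∫ p, H p.2 ∂γ := by
    rw [integral_add I1 hHγ, integral_add hgγ hndc, integral_const_mul]
  have hΨeq : ∫ p, Ψ p.1 ∂γ = ∫ ξ, Ψ ξ ∂μ := hmapeq _ hμΨ
  have hHνval : ∫ x, H x ∂ν ≤ (1 / N : ℝ) * ∑ n, y n := by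
    rw [hintν_eq _ hHc.stronglyMeasurable]
    refine mul_le_mul_of_nonneg_left ?_ (by positivity)
    exact Finset.sum_le_sum fun n _ => hHle n
  have hrle : lam * (∫ p, ‖p.1 - p.2‖ ∂γ) ≤ lam * (θ + ε') := by
    refine mul_le_mul_of_nonneg_left ?_ hlam
    rw [← hreq]; exact hrlt.le
  have hlamε : lam * ε' ≤ ε := by
    rw [hε'def]
    rw [div_eq_inv_mul, ← mul_assoc]
    have h1 : lam * (lam + 1)⁻¹ ≤ 1 := by
      rw [mul_inv_le_iff₀ (by linarith)]
      linarith
    nlinarith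
  have final : ∫ ξ, Ψ ξ ∂μ ≤ τ * (Γ * Shat).trace + lam * (θ + ε')
      + (1 / N : ℝ) * ∑ n, y n := by
    rw [← hΨeq]
    calc ∫ p, Ψ p.1 ∂γ ≤ (∫ p, g p.1 ∂γ) + lam * (∫ p, ‖p.1 - p.2‖ ∂γ) + ∫ p, H p.2 ∂γ :=
          le_trans hmono (le_of_eq hsplit)
      _ ≤ τ * (Γ * Shat).trace + lam * (θ + ε') + (1 / N : ℝ) * ∑ n, y n := by
          have e1 : ∫ p, g p.1 ∂γ = ∫ ξ, g ξ ∂μ := hmapeq _ hg_int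
          have e2 : ∫ p, H p.2 ∂γ = ∫ x, H x ∂ν := hmapeq2 _ hνH
          rw [e1, e2, hg_val]
          have := hg_tr
          linarith [hHνval, hrle]
  have : lam * (θ + ε') ≤ lam * θ + ε := by
    rw [mul_add]; linarith
  linarith
end
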